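/- Let R be a commutative noetherian ring, M a finitely generated R-module, and n ≥ 0 an integer. If M can be embedded in a finitely generated R-module of projective dimension at most n (i.e., there is an injective R-homomorphism M → W with pd_R W ≤ n), then the n-th syzygy Ω^n M is an (n+1)st syzygy; that is, there exist a finitely generated R-module N and an exact sequence 0 → Ω^n M → Q_n → Q_{n-1} → ⋯ → Q_0 → N → 0 with each Q_i finitely generated projective. -/

import Mathlib

/-! Preamble: syzygies, transposes, torsionfreeness, projective/injective dimension,
Ext and Tor for finitely generated modules over a commutative noetherian ring. -/

open CategoryTheory

noncomputable section

universe u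

variable (R : Type u) [CommRing R]

/-- The `i`-th Ext module `Ext^i_R(X, Y)` as an object of `ModuleCat R`. -/
abbrev ExtMod (i : ℕ) (X Y : ModuleCat.{u} R) : ModuleCat.{u} R :=
  ((Ext R (ModuleCat.{u} R) i).obj (Opposite.op X)).obj Y

/-- The `i`-th Tor module `Tor^R_i(X, Y)` as an object of `ModuleCat R`. -/
abbrev TorMod (i : ℕ) (X Y : ModuleCat.{u} R) : ModuleCat.{u} R :=
  ((Tor (ModuleCat.{u} R) i).obj X).obj Y

/-- `0 → A → B → C → 0` is a short exact sequence. -/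
def IsSES {A B C : ModuleCat.{u} R} (f : A ⟶ B) (g : B ⟶ C) : Prop :=
  Function.Injective f ∧ Function.Surjective g ∧ LinearMap.range f.hom = LinearMap.ker g.hom

/-- A finitely generated projective module object. -/
def IsFGProj (P : ModuleCat.{u} R) : Prop :=
  Module.Finite R P ∧ Module.Projective R P

/-- `IsSyzygyOf R n M K` : `K` is an `n`-th syzygy of `M`, i.e. there is an exact sequence
`0 → K → P_{n-1} → ⋯ → P_0 → M → 0` with all `P_i` finitely generated projective. -/
inductive IsSyzygyOf : ℕ → ModuleCat.{u} R → ModuleCat.{u} R → Prop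
  | zero (M K : ModuleCat.{u} R) (e : K ≃ₗ[R] M) : IsSyzygyOf 0 M K
  | succ (n : ℕ) (M K K' P : ModuleCat.{u} R) (hP : IsFGProj R P)
      (f : K ⟶ P) (g : P ⟶ K') (hses : IsSES R f g)
      (h : IsSyzygyOf n M K') : IsSyzygyOf (n + 1) M K

/-- `IsTranspose R M T` : `T` is an (Auslander) transpose of `M`, i.e. there is a projective
presentation `P₁ →d P₀ → M → 0` by finitely generated projectives such that
`T ≅ Coker (d* : Hom(P₀,R) → Hom(P₁,R))`. -/
def IsTranspose (M T : ModuleCat.{u} R) : Prop :=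
  ∃ (P₀ P₁ : ModuleCat.{u} R) (d : P₁ ⟶ P₀) (π : P₀ ⟶ M),
    IsFGProj R P₀ ∧ IsFGProj R P₁ ∧ Function.Surjective π ∧
    LinearMap.range d.hom = LinearMap.ker π.hom ∧
    Nonempty (T ≃ₗ[R]
      (Module.Dual R P₁ ⧸ LinearMap.range (LinearMap.dualMap (d.hom : P₁ →ₗ[R] P₀))))

/-- A module `X` is `m`-torsionfree if `Ext^i_R(Tr X, R) = 0` for `1 ≤ i ≤ m`
(this does not depend on the choice of the transpose `Tr X`). -/
def IsTorsionfree (m : ℕ) (X : ModuleCat.{u} R) : Prop :=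
  ∀ T : ModuleCat.{u} R, IsTranspose R X T →
    ∀ i : ℕ, 1 ≤ i → i ≤ m → Subsingleton (ExtMod R i T (ModuleCat.of R R))

/-- `HasPdLE R n W` : `W` admits a projective resolution
`0 → P_n → ⋯ → P_0 → W → 0` by finitely generated projectives,
i.e. (for finitely generated `W`) `W` has projective dimension at most `n`. -/
inductive HasPdLE : ℕ → ModuleCat.{u} R → Prop
  | zero (W : ModuleCat.{u} R) (h : Module.Projective R W) : HasPdLE 0 W
  | succ (n : ℕ) (W K P : ModuleCat.{u} R) (hP : IsFGProj R P)
      (f : K ⟶ P) (g : P ⟶ W) (hses : IsSES R f g) (h : HasPdLE n K) : HasPdLE (n + 1) W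

/-- `HasIdLE R n W` : `W` admits an injective resolution of length `n`,
i.e. `W` has injective dimension at most `n`. -/
inductive HasIdLE : ℕ → ModuleCat.{u} R → Prop
  | zero (W : ModuleCat.{u} R) (h : Module.Injective R W) : HasIdLE 0 W
  | succ (n : ℕ) (W I C : ModuleCat.{u} R) (hI : Module.Injective R I)
      (f : W ⟶ I) (g : I ⟶ C) (hses : IsSES R f g) (h : HasIdLE n C) : HasIdLE (n + 1) W

/-- A local ring is Gorenstein if it has finite injective dimension over itself. -/
def IsGorenstein : Prop := ∃ n : ℕ, HasIdLE R n (ModuleCat.of R R)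

/-- A finitely generated module `G` is Gorenstein projective if
`Ext^i_R(G,R) = 0` and `Ext^i_R(Tr G,R) = 0` for all `i > 0`. -/
def IsGorensteinProj (G : ModuleCat.{u} R) : Prop :=
  Module.Finite R G ∧
  (∀ i : ℕ, 1 ≤ i → Subsingleton (ExtMod R i G (ModuleCat.of R R))) ∧
  ∀ T : ModuleCat.{u} R, IsTranspose R G T →
    ∀ i : ℕ, 1 ≤ i → Subsingleton (ExtMod R i T (ModuleCat.of R R))

/-- `HasGdimLE R n W` : there is an exact sequence `0 → G_n → ⋯ → G_0 → W → 0`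
with all `G_i` Gorenstein projective; in particular `W` has finite Gorenstein dimension. -/
inductive HasGdimLE : ℕ → ModuleCat.{u} R → Prop
  | zero (W G : ModuleCat.{u} R) (hG : IsGorensteinProj R G) (e : W ≃ₗ[R] G) : HasGdimLE 0 W
  | succ (n : ℕ) (W K G : ModuleCat.{u} R) (hG : IsGorensteinProj R G)
      (f : K ⟶ G) (g : G ⟶ W) (hses : IsSES R f g) (h : HasGdimLE n K) : HasGdimLE (n + 1) W

section LocalRing

variable [IsLocalRing R]

/-- The residue field `k` of a local ring `R`, as an object of `ModuleCat R`. -/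
abbrev ResFld : ModuleCat.{u} R := ModuleCat.of R (IsLocalRing.ResidueField R)

/-- `X` is a `k`-vector space of dimension `d` (as an `R`-module killed by the maximal ideal). -/
def IsKVecDim (X : Type u) [AddCommGroup X] [Module R X] (d : ℕ) : Prop :=
  Nonempty (X ≃ₗ[R] (Fin d → IsLocalRing.ResidueField R))

/-- The local ring `R` has depth `t`, via Rees' characterization
`depth R = inf { i | Ext^i_R(k, R) ≠ 0 }`. -/
def HasDepth (t : ℕ) : Prop :=
  (∀ i : ℕ, i < t → Subsingleton (ExtMod R i (ResFld R) (ModuleCat.of R R))) ∧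
    ¬ Subsingleton (ExtMod R t (ResFld R) (ModuleCat.of R R))

/-- `depth_R M ≥ t`, via Rees' characterization of depth by vanishing of `Ext^i_R(k, M)`. -/
def DepthGE (M : ModuleCat.{u} R) (t : ℕ) : Prop :=
  ∀ i : ℕ, i < t → Subsingleton (ExtMod R i (ResFld R) M)

end LocalRing

/-! By induction on `n` one shows more generally: if `0 → A → W → C → 0` is exact with `W` finitely
generated of projective dimension at most `n`, then every `n`-th syzygy `K` of `A` is an
`(n+1)`-st syzygy of `C`; the theorem is the case `C = W / M`. For `n = 0`, `W` is projective
and `0 → K → W → C → 0` does it. Otherwise take `0 → L → Q → W → 0` with `Q` projective and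
`pd L ≤ n - 1`, and `0 → B → P → A → 0` with `P` projective and `K` an `(n-1)`-st syzygy of `B`.
The fibre product `X = P ×_W Q` is an extension of `P` by `L`, so it splits and `pd X ≤ n - 1`;
it is finitely generated because `R` is noetherian. Moreover `X` fits into exact sequences
`0 → B → X → E → 0` and `0 → E → Q → C → 0` with `E` the preimage of `A` in `Q`. By induction `K`
is an `n`-th syzygy of `E`, hence an `(n+1)`-st syzygy of `C`. -/

section

variable {R}

open ModuleCat

lemma isSES_ofHom {A B C : Type u} [AddCommGroup A] [AddCommGroup B] [AddCommGroup C]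
    [Module R A] [Module R B] [Module R C] {f : A →ₗ[R] B} {g : B →ₗ[R] C}
    (hf : Function.Injective f) (hg : Function.Surjective g) (hfg : Function.Exact f g) :
    IsSES R (ofHom f) (ofHom g) :=
  ⟨hf, hg, (LinearMap.exact_iff.mp hfg).symm⟩

namespace IsSES

variable {A B C : ModuleCat.{u} R} {f : A ⟶ B} {g : B ⟶ C}

lemma exact (h : IsSES R f g) : Function.Exact f.hom g.hom :=
  LinearMap.exact_iff.mpr h.2.2.symm

lemma precomp_linearEquiv (h : IsSES R f g) {A' : ModuleCat.{u} R} (e : A' ≃ₗ[R] A) :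
    IsSES R ((ofHom e.toLinearMap : A' ⟶ A) ≫ f) g :=
  isSES_ofHom (h.1.comp e.injective) h.2.1 (LinearEquiv.precomp_exact_iff_exact.mpr h.exact)

lemma postcomp_linearEquiv (h : IsSES R f g) {C' : ModuleCat.{u} R} (e : C ≃ₗ[R] C') :
    IsSES R f (g ≫ (ofHom e.toLinearMap : C ⟶ C')) :=
  isSES_ofHom h.1 (e.surjective.comp h.2.1) (LinearEquiv.postcomp_exact_iff_exact.mpr h.exact)

end IsSES

namespace IsSyzygyOf

lemma succ_of_isSES {m : ℕ} {E K Q C : ModuleCat.{u} R} (h : IsSyzygyOf R m E K)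
    (hQ : IsFGProj R Q) {a : E ⟶ Q} {b : Q ⟶ C} (hab : IsSES R a b) :
    IsSyzygyOf R (m + 1) C K := by
  induction h with
  | zero _ _ e => exact .succ 0 C _ C Q hQ _ b (hab.precomp_linearEquiv e) (.zero C C (.refl R C))
  | succ n _ K K' P hP u v huv _ ih => exact .succ (n + 1) C K K' P hP u v huv (ih hab)

lemma exists_isSES_of_succ {n : ℕ} {M K : ModuleCat.{u} R} (h : IsSyzygyOf R (n + 1) M K) :
    ∃ (B P : ModuleCat.{u} R) (ι : B ⟶ P) (π : P ⟶ M),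
      IsFGProj R P ∧ IsSES R ι π ∧ IsSyzygyOf R n B K := by
  induction n generalizing K with
  | zero =>
    cases h with | succ _ _ _ K' P hP ι π hιπ h =>
    cases h with | zero _ _ e =>
    exact ⟨K, P, ι, π ≫ ofHom e.toLinearMap, hP, hιπ.postcomp_linearEquiv e, .zero K K (.refl R K)⟩
  | succ n ih =>
    cases h with | succ _ _ _ K' P hP ι π hιπ h =>
    obtain ⟨B, P', ι', π', hP', hιπ', hB⟩ := ih h
    exact ⟨B, P', ι', π', hP', hιπ', .succ n B K K' P hP ι π hιπ hB⟩

end IsSyzygyOf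

namespace HasPdLE

lemma of_linearEquiv {n : ℕ} {W W' : ModuleCat.{u} R} (h : HasPdLE R n W) (e : W ≃ₗ[R] W') :
    HasPdLE R n W' := by
  cases h with
  | zero _ hW => exact .zero W' (Module.Projective.of_equiv e)
  | succ n _ L P hP f g hfg hL => exact .succ n W' L P hP f _ (hfg.postcomp_linearEquiv e) hL

lemma prod {n : ℕ} {L P : ModuleCat.{u} R} (hL : HasPdLE R n L) (hP : IsFGProj R P) :
    HasPdLE R n (of R (L × P)) := by
  obtain ⟨_, _⟩ := hP
  cases hL with
  | zero _ hL => exact .zero _ inferInstance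
  | succ n _ K P' hP' f g hfg hK =>
    obtain ⟨_, _⟩ := hP'
    refine .succ n _ K (of R (P' × P)) ⟨inferInstance, inferInstance⟩
      (ofHom (LinearMap.inl R P' P ∘ₗ f.hom)) (ofHom (g.hom.prodMap LinearMap.id))
      (isSES_ofHom (LinearMap.inl_injective.comp hfg.1)
        (Function.Surjective.prodMap hfg.2.1 Function.surjective_id) ?_) hK
    rintro ⟨p', p⟩
    change (g p', p) = 0 ↔ ∃ k, (f k, 0) = (p', p)
    simp only [Prod.ext_iff, Prod.fst_zero, Prod.snd_zero, exists_and_right]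
    exact and_congr (hfg.exact p') eq_comm

lemma of_isSES {n : ℕ} {L X P : ModuleCat.{u} R} {u : L ⟶ X} {v : X ⟶ P}
    (huv : IsSES R u v) (hL : HasPdLE R n L) (hP : IsFGProj R P) : HasPdLE R n X := by
  have := hP.2
  obtain ⟨s, hs⟩ := Module.projective_lifting_property v.hom LinearMap.id huv.2.1
  exact (hL.prod hP).of_linearEquiv (huv.exact.splitSurjectiveEquiv huv.1 ⟨s, hs⟩).1.symm

end HasPdLE

variable {P Q W : ModuleCat.{u} R}

def fiberProduct (φ : P ⟶ W) (σ : Q ⟶ W) : Submodule R (P × Q) :=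
  LinearMap.eqLocus (φ.hom ∘ₗ LinearMap.fst R P Q) (σ.hom ∘ₗ LinearMap.snd R P Q)

lemma mem_fiberProduct {φ : P ⟶ W} {σ : Q ⟶ W} {z : P × Q} :
    z ∈ fiberProduct φ σ ↔ φ z.1 = σ z.2 :=
  Iff.rfl

lemma hasPdLE_fiberProduct {n : ℕ} {L : ModuleCat.{u} R} {ι : L ⟶ Q} {σ : Q ⟶ W}
    (hισ : IsSES R ι σ) (hL : HasPdLE R n L) (hP : IsFGProj R P) (φ : P ⟶ W) :
    HasPdLE R n (of R (fiberProduct φ σ)) := by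
  have hmem (l : L) : ((0 : P), ι l) ∈ fiberProduct φ σ := by
    simp [mem_fiberProduct, hισ.exact.apply_apply_eq_zero]
  refine hL.of_isSES (isSES_ofHom (f := LinearMap.codRestrict _ (LinearMap.inr R P Q ∘ₗ ι.hom) hmem)
    (g := LinearMap.fst R P Q ∘ₗ (fiberProduct φ σ).subtype) ?_ ?_ ?_) hP
  · exact fun a b h ↦ hισ.1 (congrArg (fun x ↦ x.1.2) h)
  · intro p
    obtain ⟨q, hq⟩ := hισ.2.1 (φ p)
    exact ⟨⟨(p, q), hq.symm⟩, rfl⟩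
  · rintro ⟨⟨p, q⟩, hpq⟩
    rw [mem_fiberProduct] at hpq
    constructor
    · rintro (rfl : p = 0)
      obtain ⟨l, rfl⟩ := (hισ.exact q).mp (by simpa using hpq.symm)
      exact ⟨l, rfl⟩
    · rintro ⟨l, hl⟩
      exact congrArg (fun x ↦ x.1.1) hl.symm

lemma exists_isSES_fiberProduct {A C B : ModuleCat.{u} R} {f : A ⟶ W} {c : W ⟶ C}
    (hfc : IsSES R f c) {ι : B ⟶ P} {π : P ⟶ A} (hιπ : IsSES R ι π) {σ : Q ⟶ W}
    (hσ : Function.Surjective σ) :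
    ∃ (E : ModuleCat.{u} R) (j : B ⟶ of R (fiberProduct (π ≫ f) σ))
      (p : of R (fiberProduct (π ≫ f) σ) ⟶ E) (i : E ⟶ Q), IsSES R j p ∧ IsSES R i (σ ≫ c) := by
  have hjmem (b : B) : (ι b, (0 : Q)) ∈ fiberProduct (π ≫ f) σ := by
    simp [mem_fiberProduct, hιπ.exact.apply_apply_eq_zero]
  have hpmem (x : fiberProduct (π ≫ f) σ) : x.1.2 ∈ LinearMap.ker (σ ≫ c).hom := by
    rw [LinearMap.mem_ker, ModuleCat.hom_comp, LinearMap.comp_apply, ← mem_fiberProduct.mp x.2]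
    exact hfc.exact.apply_apply_eq_zero _
  refine ⟨of R (LinearMap.ker (σ ≫ c).hom),
    ofHom (LinearMap.codRestrict _ (ι.hom.prod 0) hjmem),
    ofHom (LinearMap.codRestrict _ (LinearMap.snd R P Q ∘ₗ Submodule.subtype _) hpmem),
    ofHom (Submodule.subtype _), isSES_ofHom ?_ ?_ ?_,
    isSES_ofHom Subtype.val_injective (hfc.2.1.comp hσ) (LinearMap.exact_subtype_ker_map _)⟩
  · exact fun a b h ↦ hιπ.1 (congrArg (fun x ↦ x.1.1) h)
  · rintro ⟨q, hq⟩
    obtain ⟨a, ha⟩ := (hfc.exact (σ q)).mp hq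
    obtain ⟨p, rfl⟩ := hιπ.2.1 a
    exact ⟨⟨(p, q), ha⟩, rfl⟩
  · rintro ⟨⟨p, q⟩, hpq⟩
    rw [mem_fiberProduct] at hpq
    constructor
    · intro hq
      obtain rfl : q = 0 := congrArg Subtype.val hq
      obtain ⟨b, rfl⟩ := (hιπ.exact p).mp (hfc.1 (by simpa using hpq))
      exact ⟨b, rfl⟩
    · rintro ⟨b, hb⟩
      exact Subtype.ext (congrArg (fun x ↦ x.1.2) hb.symm)

end

theorem IsSyzygyOf.succ_of_isSES_of_hasPdLE {R : Type u} [CommRing R] [IsNoetherianRing R]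
    {n : ℕ} {A W C K : ModuleCat.{u} R} {f : A ⟶ W} {c : W ⟶ C} (hfc : IsSES R f c)
    (hW : Module.Finite R W) (hpd : HasPdLE R n W) (hK : IsSyzygyOf R n A K) :
    IsSyzygyOf R (n + 1) C K := by
  induction n generalizing A W C K with
  | zero =>
    cases hpd with | zero _ hproj =>
    exact hK.succ_of_isSES ⟨hW, hproj⟩ hfc
  | succ n ih =>
    cases hpd with | succ _ _ L Q hQ ι σ hισ hL =>
    obtain ⟨B, P, j, π, hP, hjπ, hB⟩ := hK.exists_isSES_of_succ
    obtain ⟨E, b, p, i, hbp, hi⟩ := exists_isSES_fiberProduct hfc hjπ hισ.2.1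
    have := hP.1
    have := hQ.1
    exact (ih hbp inferInstance (hasPdLE_fiberProduct hισ hL hP _) hB).succ_of_isSES hQ hi

theorem stmt2_general (R : Type u) [CommRing R] [IsNoetherianRing R]
    (M : ModuleCat.{u} R) (n : ℕ)
    (W : ModuleCat.{u} R) (hW : Module.Finite R W) (hpd : HasPdLE R n W)
    (f : M ⟶ W) (hf : Function.Injective f) :
    ∀ K : ModuleCat.{u} R, IsSyzygyOf R n M K →
      ∃ N : ModuleCat.{u} R, Module.Finite R N ∧ IsSyzygyOf R (n + 1) N K := by
  intro K hK
  have hfc : IsSES R f (ModuleCat.ofHom (LinearMap.range f.hom).mkQ) :=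
    ⟨hf, Submodule.mkQ_surjective _, (Submodule.ker_mkQ _).symm⟩
  exact ⟨_, Module.Finite.quotient R _, hK.succ_of_isSES_of_hasPdLE hfc hW hpd⟩

/-- If `M` embeds in a finitely generated module of projective dimension at most
`n`, then the `n`-th syzygy of `M` is an `(n+1)`st syzygy. -/
theorem stmt2 (R : Type u) [CommRing R] [IsNoetherianRing R]
    (M : ModuleCat.{u} R) (hM : Module.Finite R M) (n : ℕ)
    (W : ModuleCat.{u} R) (hW : Module.Finite R W) (hpd : HasPdLE R n W)
    (f : M ⟶ W) (hf : Function.Injective f) :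
    ∀ K : ModuleCat.{u} R, IsSyzygyOf R n M K →
      ∃ N : ModuleCat.{u} R, Module.Finite R N ∧ IsSyzygyOf R (n + 1) N K :=
  stmt2_general R M n W hW hpd f hf

end
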